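/- arXiv:2107.11588 — 3 statements merged into one kernel-verified Lean document; each statement's English description precedes it below -/
import Mathlib

section
/- Let a_1,...,a_M > 0 and b_1,...,b_M ≥ 0, and for ρ > 0 consider minimizing F_ρ(p) = ρ·Σ_m a_m²/p_m + Σ_m b_m p_m over the open probability simplex, with optimizer p*(ρ). As ρ → ∞, p*_m(ρ) → a_m/(Σ_k a_k) for every m. -/
/-!
Test the optimality of `p = p*(ρ)` against the importance-aware distribution `q = a / S`,
`S = ∑ aₖ`, for which `∑ aₖ² / qₖ = S²`. On the simplex the linear term `∑ bₖ pₖ` lies in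
`[-∑ |bₖ|, ∑ |bₖ|]`, so `ρ (∑ aₖ² / pₖ - S²) ≤ 2 ∑ |bₖ|`. The excess `∑ aₖ² / pₖ - S²` equals
`∑ (aₖ - S pₖ)² / pₖ ≥ (aₘ - S pₘ)²`, hence `|pₘ - aₘ / S| = O(ρ^(-1/2))`.
-/

open Finset

section Simplex

variable {ι : Type*} [Fintype ι]

theorem abs_sum_mul_le_sum_abs_of_sum_eq_one (b p : ι → ℝ) (hp : ∀ k, 0 ≤ p k)
    (hsum : ∑ k, p k = 1) : |∑ k, b k * p k| ≤ ∑ k, |b k| := by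
  have hp_le_one : ∀ k, p k ≤ 1 := fun k =>
    hsum ▸ single_le_sum (fun j _ => hp j) (mem_univ k)
  calc |∑ k, b k * p k| ≤ ∑ k, |b k * p k| := abs_sum_le_sum_abs _ _
    _ ≤ ∑ k, |b k| := sum_le_sum fun k _ => by
        rw [abs_mul, abs_of_nonneg (hp k)]
        exact mul_le_of_le_one_right (abs_nonneg _) (hp_le_one k)

theorem sum_sq_div_sub_sq_sum_eq (a p : ι → ℝ) (hp : ∀ k, p k ≠ 0) (hsum : ∑ k, p k = 1) :
    ∑ k, a k ^ 2 / p k - (∑ k, a k) ^ 2 = ∑ k, (a k - (∑ j, a j) * p k) ^ 2 / p k := by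
  set S := ∑ j, a j
  have hexpand : ∀ k, (a k - S * p k) ^ 2 / p k = a k ^ 2 / p k - 2 * S * a k + S ^ 2 * p k :=
    fun k => by field_simp [hp k]; ring
  simp only [hexpand, sum_add_distrib, sum_sub_distrib, ← mul_sum, hsum]
  ring

theorem sq_sub_mul_le_sum_sq_div_sub_sq_sum (a p : ι → ℝ) (hp : ∀ k, 0 < p k)
    (hsum : ∑ k, p k = 1) (m : ι) :
    (a m - (∑ j, a j) * p m) ^ 2 ≤ ∑ k, a k ^ 2 / p k - (∑ k, a k) ^ 2 := by
  set S := ∑ j, a j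
  have hp_le_one : p m ≤ 1 := hsum ▸ single_le_sum (fun j _ => (hp j).le) (mem_univ m)
  rw [sum_sq_div_sub_sq_sum_eq a p (fun k => (hp k).ne') hsum]
  calc (a m - S * p m) ^ 2 ≤ (a m - S * p m) ^ 2 / p m :=
        le_div_self (sq_nonneg _) (hp m) hp_le_one
    _ ≤ ∑ k, (a k - S * p k) ^ 2 / p k :=
        single_le_sum (f := fun k => (a k - S * p k) ^ 2 / p k)
          (fun k _ => div_nonneg (sq_nonneg _) (hp k).le) (mem_univ m)

theorem sum_sq_div_div_sum_eq (a : ι → ℝ) (ha : ∀ k, a k ≠ 0) :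
    ∑ k, a k ^ 2 / (a k / ∑ j, a j) = (∑ k, a k) ^ 2 := by
  have hterm : ∀ k, a k ^ 2 / (a k / ∑ j, a j) = a k * ∑ j, a j := fun k => by
    rw [div_div_eq_mul_div, sq, mul_assoc, mul_div_assoc, mul_div_cancel_left₀ _ (ha k)]
  rw [Fintype.sum_congr _ _ hterm, ← sum_mul, sq]

theorem sq_sub_div_sum_le_of_optimal (a b p : ι → ℝ) (ha : ∀ k, 0 < a k)
    {ρ : ℝ} (hρ : 0 < ρ) (hp : ∀ k, 0 < p k) (hsum : ∑ k, p k = 1)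
    (hopt : ∀ q : ι → ℝ, (∀ k, 0 < q k) → ∑ k, q k = 1 →
      ρ * ∑ k, a k ^ 2 / p k + ∑ k, b k * p k ≤ ρ * ∑ k, a k ^ 2 / q k + ∑ k, b k * q k)
    (m : ι) :
    (p m - a m / ∑ k, a k) ^ 2 ≤ 2 * (∑ k, |b k|) / (∑ k, a k) ^ 2 / ρ := by
  set S := ∑ k, a k
  have hS : 0 < S := sum_pos (fun k _ => ha k) ⟨m, mem_univ m⟩
  have hq : ∀ k, 0 < a k / S := fun k => div_pos (ha k) hS
  have hqsum : ∑ k, a k / S = 1 := by rw [← sum_div, div_self hS.ne']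
  have hcompare := hopt _ hq hqsum
  rw [sum_sq_div_div_sum_eq a fun k => (ha k).ne'] at hcompare
  have hbp := abs_le.mp (abs_sum_mul_le_sum_abs_of_sum_eq_one b p (fun k => (hp k).le) hsum)
  have hbq := abs_le.mp (abs_sum_mul_le_sum_abs_of_sum_eq_one b _ (fun k => (hq k).le) hqsum)
  have hexcess : ρ * (∑ k, a k ^ 2 / p k - S ^ 2) ≤ 2 * ∑ k, |b k| := by nlinarith
  have hdev := sq_sub_mul_le_sum_sq_div_sub_sq_sum a p hp hsum m
  have hrewrite : (p m - a m / S) ^ 2 = (a m - S * p m) ^ 2 / S ^ 2 := by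
    field_simp; ring
  rw [hrewrite, div_right_comm]
  refine div_le_div_of_nonneg_right ?_ (sq_nonneg S)
  rw [le_div_iff₀ hρ]
  nlinarith

end Simplex

theorem optimizer_tends_to_importance_aware_general
    (M : ℕ) (a b : Fin M → ℝ) (ha : ∀ m, 0 < a m)
    (pstar : ℝ → Fin M → ℝ)
    (hfeas : ∀ ρ : ℝ, 0 < ρ → (∀ m, 0 < pstar ρ m) ∧ (∑ m, pstar ρ m = 1))
    (hopt : ∀ ρ : ℝ, 0 < ρ → ∀ q : Fin M → ℝ, (∀ m, 0 < q m) → (∑ m, q m = 1) →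
      ρ * ∑ m, (a m) ^ 2 / pstar ρ m + ∑ m, b m * pstar ρ m ≤
        ρ * ∑ m, (a m) ^ 2 / q m + ∑ m, b m * q m) :
    ∀ m, Filter.Tendsto (fun ρ => pstar ρ m) Filter.atTop
      (nhds (a m / ∑ k, a k)) := by
  intro m
  set K := 2 * (∑ k, |b k|) / (∑ k, a k) ^ 2
  have hbound : ∀ᶠ ρ in Filter.atTop, ‖pstar ρ m - a m / ∑ k, a k‖ ≤ √(K * ρ⁻¹) := by
    filter_upwards [Filter.eventually_gt_atTop 0] with ρ hρ
    exact Real.abs_le_sqrt (sq_sub_div_sum_le_of_optimal a b (pstar ρ) ha hρ (hfeas ρ hρ).1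
      (hfeas ρ hρ).2 (hopt ρ hρ) m)
  have hlim : Filter.Tendsto (fun ρ : ℝ => √(K * ρ⁻¹)) Filter.atTop (nhds 0) := by
    simpa using (tendsto_inv_atTop_zero.const_mul K).sqrt
  exact tendsto_iff_norm_sub_tendsto_zero.mpr
    (squeeze_zero' (Filter.Eventually.of_forall fun _ => norm_nonneg _) hbound hlim)

theorem optimizer_tends_to_importance_aware
    (M : ℕ) (a b : Fin M → ℝ) (ha : ∀ m, 0 < a m) (hb : ∀ m, 0 ≤ b m)
    (pstar : ℝ → Fin M → ℝ)
    (hfeas : ∀ ρ : ℝ, 0 < ρ → (∀ m, 0 < pstar ρ m) ∧ (∑ m, pstar ρ m = 1))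
    (hopt : ∀ ρ : ℝ, 0 < ρ → ∀ q : Fin M → ℝ, (∀ m, 0 < q m) → (∑ m, q m = 1) →
      ρ * ∑ m, (a m) ^ 2 / pstar ρ m + ∑ m, b m * pstar ρ m ≤
        ρ * ∑ m, (a m) ^ 2 / q m + ∑ m, b m * q m) :
    ∀ m, Filter.Tendsto (fun ρ => pstar ρ m) Filter.atTop
      (nhds (a m / ∑ k, a k)) :=
  optimizer_tends_to_importance_aware_general M a b ha pstar hfeas hopt
end

section
/- Let L be ℓ-smooth and μ-strongly convex with 2μχ > 1, and let (Δ_t) be a nonnegative sequence satisfying Δ_{t+1} ≤ (1 − 2μη_t)Δ_t + (ℓη_t²/2)G² with η_t = χ/(t+ν) ≤ 1/(2μ) and ν ≥ 1. Then Δ_t ≤ ζ/(t+ν) for all t ≥ t₀, where ζ = max{ ℓχ²G²/(2(2μχ−1)), (t₀+ν)Δ_{t₀} }. -/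
/-!
If `Δ t ≤ ζ / s` with `s = t + ν`, the recursion gives
`Δ (t + 1) ≤ ((s - c) ζ + B) / s²` with `c = 2μχ` and `B = ℓχ²G²/2`. The choice of `ζ` makes
`B ≤ (c - 1) ζ`, so this is at most `(s - 1) ζ / s² ≤ ζ / (s + 1)`, because `(s - 1)(s + 1) ≤ s²`.
The base case `t = t₀` is the second entry of the maximum.
-/

lemma one_sub_div_mul_div_add_div_sq_le {s c B ζ : ℝ} (hs : 0 < s) (hζ : 0 ≤ ζ)
    (hB : B ≤ (c - 1) * ζ) :
    (1 - c / s) * (ζ / s) + B / s ^ 2 ≤ ζ / (s + 1) := by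
  calc (1 - c / s) * (ζ / s) + B / s ^ 2
      = ((s - c) * ζ + B) / s ^ 2 := by field_simp
    _ ≤ (s - 1) * ζ / s ^ 2 := by gcongr; linarith
    _ ≤ ζ / (s + 1) := by
      rw [div_le_div_iff₀ (by positivity) (by positivity)]
      nlinarith

theorem le_div_of_le_one_sub_div_mul_add_div_sq {Δ : ℕ → ℝ} {c B ζ ν : ℝ} {t₀ : ℕ}
    (hν : 0 < ν) (hζ : 0 ≤ ζ) (hB : B ≤ (c - 1) * ζ)
    (hcoef : ∀ t, t₀ ≤ t → 0 ≤ 1 - c / (t + ν))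
    (hrec : ∀ t, t₀ ≤ t → Δ (t + 1) ≤ (1 - c / (t + ν)) * Δ t + B / (t + ν) ^ 2)
    (hbase : Δ t₀ ≤ ζ / (t₀ + ν)) :
    ∀ t, t₀ ≤ t → Δ t ≤ ζ / (t + ν) := by
  intro t ht
  induction t, ht using Nat.le_induction with
  | base => exact hbase
  | succ t ht ih =>
    calc Δ (t + 1) ≤ (1 - c / (t + ν)) * Δ t + B / (t + ν) ^ 2 := hrec t ht
      _ ≤ (1 - c / (t + ν)) * (ζ / (t + ν)) + B / (t + ν) ^ 2 := by
        gcongr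
        exact hcoef t ht
      _ ≤ ζ / (t + ν + 1) := one_sub_div_mul_div_add_div_sq_le (by positivity) hζ hB
      _ = ζ / ((t + 1 : ℕ) + ν) := by push_cast; ring_nf

theorem sgd_one_over_t_convergence_general
    (μ χ ℓ G ν : ℝ) (hμ : 0 < μ) (hℓ : 0 < ℓ)
    (hν : 1 ≤ ν) (hμχ : 1 < 2 * μ * χ)
    (η : ℕ → ℝ) (hη : ∀ t, η t = χ / (t + ν))
    (hηsmall : ∀ t, η t ≤ 1 / (2 * μ))
    (Δ : ℕ → ℝ)
    (t₀ : ℕ)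
    (hrec : ∀ t : ℕ, t₀ ≤ t →
      Δ (t + 1) ≤ (1 - 2 * μ * η t) * Δ t + ℓ * (η t) ^ 2 / 2 * G ^ 2)
    (ζ : ℝ)
    (hζ : ζ = max (ℓ * χ ^ 2 * G ^ 2 / (2 * (2 * μ * χ - 1))) ((t₀ + ν) * Δ t₀)) :
    ∀ t : ℕ, t₀ ≤ t → Δ t ≤ ζ / (t + ν) := by
  have hc : 0 < 2 * μ * χ - 1 := by linarith
  have hfirst : ℓ * χ ^ 2 * G ^ 2 / (2 * (2 * μ * χ - 1)) ≤ ζ := hζ ▸ le_max_left _ _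
  have hζ0 : 0 ≤ ζ := le_trans (by positivity) hfirst
  have hB : ℓ * χ ^ 2 * G ^ 2 / 2 ≤ (2 * μ * χ - 1) * ζ := by
    rw [div_le_iff₀ (by positivity)] at hfirst
    linarith
  have hη_div (t : ℕ) : 2 * μ * η t = 2 * μ * χ / (t + ν) ∧
      ℓ * η t ^ 2 / 2 * G ^ 2 = ℓ * χ ^ 2 * G ^ 2 / 2 / (t + ν) ^ 2 := by
    rw [hη, div_pow]
    constructor <;> ring
  refine le_div_of_le_one_sub_div_mul_add_div_sq (by linarith) hζ0 hB (fun t _ ↦ ?_)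
    (fun t ht ↦ (hη_div t).1 ▸ (hη_div t).2 ▸ hrec t ht) ?_
  · rw [← (hη_div t).1, sub_nonneg, ← le_div_iff₀' (by positivity)]
    simpa using hηsmall t
  · rw [le_div_iff₀ (by positivity), mul_comm]
    exact hζ ▸ le_max_right _ _

theorem sgd_one_over_t_convergence
    (μ χ ℓ G ν : ℝ) (hμ : 0 < μ) (hχ : 0 < χ) (hℓ : 0 < ℓ) (hG : 0 < G)
    (hν : 1 ≤ ν) (hμχ : 1 < 2 * μ * χ)
    (η : ℕ → ℝ) (hη : ∀ t, η t = χ / (t + ν))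
    (hηsmall : ∀ t, η t ≤ 1 / (2 * μ))
    (Δ : ℕ → ℝ) (hΔ : ∀ t, 0 ≤ Δ t)
    (t₀ : ℕ)
    (hrec : ∀ t : ℕ, t₀ ≤ t →
      Δ (t + 1) ≤ (1 - 2 * μ * η t) * Δ t + ℓ * (η t) ^ 2 / 2 * G ^ 2)
    (ζ : ℝ)
    (hζ : ζ = max (ℓ * χ ^ 2 * G ^ 2 / (2 * (2 * μ * χ - 1))) ((t₀ + ν) * Δ t₀)) :
    ∀ t : ℕ, t₀ ≤ t → Δ t ≤ ζ / (t + ν) :=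
  sgd_one_over_t_convergence_general μ χ ℓ G ν hμ hℓ hν hμχ η hη hηsmall Δ t₀ hrec ζ hζ
end

section
/- Let a_1,...,a_M > 0, b_1,...,b_M ≥ 0, and let p* be the minimizer of F(p) = Σ_m a_m/p_m + b_m p_m over the open probability simplex. If a_i ≥ a_j and b_i ≤ b_j then p*_i ≥ p*_j. -/
/-!
If `pstar i < pstar j`, replacing both coordinates by their mean `s` stays in the open simplex and
strictly lowers the objective: the `b`-part changes by `(b i - b j) (pstar j - pstar i) / 2 ≤ 0`, and,
since `1 / s ≤ 1 / pstar i` and `a j ≤ a i`, the `a`-part drops by at least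
`a j (1 / pstar i + 1 / pstar j - 2 / s)`, which is positive by the strict harmonic–arithmetic mean
inequality.
-/

theorem Fintype.sum_sub_sum_eq_of_eq_off_pair {ι β : Type*} [Fintype ι] [DecidableEq ι]
    [AddCommGroup β] {f g : ι → β} {i j : ι} (hij : i ≠ j)
    (h : ∀ m, m ≠ i → m ≠ j → f m = g m) :
    ∑ m, f m - ∑ m, g m = (f i - g i) + (f j - g j) := by
  rw [← Finset.sum_sub_distrib]
  exact Fintype.sum_eq_add i j hij fun m ⟨hmi, hmj⟩ => sub_eq_zero.mpr (h m hmi hmj)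

theorem four_div_add_lt_inv_add_inv {x y : ℝ} (hx : 0 < x) (hy : 0 < y) (hxy : x ≠ y) :
    4 / (x + y) < x⁻¹ + y⁻¹ := by
  have hsq : 0 < (x - y) ^ 2 := by positivity [sub_ne_zero.mpr hxy]
  rw [inv_add_inv hx.ne' hy.ne', div_lt_div_iff₀ (by positivity) (by positivity)]
  nlinarith

theorem midpoint_cost_lt {ai aj bi bj x y : ℝ} (haj : 0 < aj) (ha : aj ≤ ai) (hb : bi ≤ bj)
    (hx : 0 < x) (hxy : x < y) :
    ai / ((x + y) / 2) + bi * ((x + y) / 2) + (aj / ((x + y) / 2) + bj * ((x + y) / 2))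
      < ai / x + bi * x + (aj / y + bj * y) := by
  set s := (x + y) / 2 with hs_def
  have hinv_s_le : 1 / s - 1 / x ≤ 0 := by
    rw [sub_nonpos]; exact one_div_le_one_div_of_le hx (by linarith)
  have hmean : 2 / s < 1 / x + 1 / y :=
    calc 2 / s = 4 / (x + y) := by rw [hs_def, div_div_eq_mul_div]; norm_num
      _ < x⁻¹ + y⁻¹ := four_div_add_lt_inv_add_inv hx (hx.trans hxy) hxy.ne
      _ = 1 / x + 1 / y := by simp only [one_div]
  have ha_part : ai / s + aj / s < ai / x + aj / y :=
    calc ai / s + aj / s = ai / x + aj / y + (ai * (1 / s - 1 / x) + aj * (1 / s - 1 / y)) := by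
          ring
      _ ≤ ai / x + aj / y + (aj * (1 / s - 1 / x) + aj * (1 / s - 1 / y)) := by
          linarith [mul_le_mul_of_nonpos_right ha hinv_s_le]
      _ = ai / x + aj / y - aj * (1 / x + 1 / y - 2 / s) := by ring
      _ < ai / x + aj / y := by
          have := mul_pos haj (sub_pos.mpr hmean)
          linarith
  have hb_part : bi * s + bj * s ≤ bi * x + bj * y := by
    have hdiff : bi * s + bj * s - (bi * x + bj * y) = (bi - bj) * (y - x) / 2 := by
      rw [hs_def]; ring
    linarith [mul_nonpos_of_nonpos_of_nonneg (sub_nonpos.mpr hb) (sub_pos.mpr hxy).le]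
  linarith

theorem optimal_probability_monotone_general
    (M : ℕ) (a b : Fin M → ℝ) (ha : ∀ m, 0 < a m)
    (pstar : Fin M → ℝ) (hpos : ∀ m, 0 < pstar m) (hsum : ∑ m, pstar m = 1)
    (hopt : ∀ p : Fin M → ℝ, (∀ m, 0 < p m) → (∑ m, p m = 1) →
      ∑ m, (a m / pstar m + b m * pstar m) ≤ ∑ m, (a m / p m + b m * p m))
    (i j : Fin M) (hab : a j ≤ a i) (hba : b i ≤ b j) :
    pstar j ≤ pstar i := by
  by_contra! hlt
  have hij : i ≠ j := by rintro rfl; exact lt_irrefl _ hlt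
  set s := (pstar i + pstar j) / 2 with hs_def
  set q : Fin M → ℝ := fun m => if m = i ∨ m = j then s else pstar m
  have hqi : q i = s := by simp [q]
  have hqj : q j = s := by simp [q]
  have hq_off : ∀ m, m ≠ i → m ≠ j → q m = pstar m := fun m hmi hmj => by simp [q, hmi, hmj]
  have hq_pos : ∀ m, 0 < q m := fun m => by
    by_cases hm : m = i ∨ m = j
    · simp only [q, if_pos hm]; positivity [hpos i, hpos j]
    · simp only [q, if_neg hm]; exact hpos m
  have hq_sum : ∑ m, q m = 1 := by
    have := Fintype.sum_sub_sum_eq_of_eq_off_pair hij hq_off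
    rw [hqi, hqj, hs_def] at this
    linarith
  have hcost := Fintype.sum_sub_sum_eq_of_eq_off_pair (f := fun m => a m / q m + b m * q m)
    (g := fun m => a m / pstar m + b m * pstar m) hij fun m hmi hmj => by simp only [hq_off m hmi hmj]
  simp only [hqi, hqj] at hcost
  have hdrop : a i / s + b i * s + (a j / s + b j * s)
      < a i / pstar i + b i * pstar i + (a j / pstar j + b j * pstar j) :=
    midpoint_cost_lt (ha j) hab hba (hpos i) hlt
  linarith [hopt q hq_pos hq_sum]

theorem optimal_probability_monotone
    (M : ℕ) (a b : Fin M → ℝ) (ha : ∀ m, 0 < a m) (hb : ∀ m, 0 ≤ b m)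
    (pstar : Fin M → ℝ) (hpos : ∀ m, 0 < pstar m) (hsum : ∑ m, pstar m = 1)
    (hopt : ∀ p : Fin M → ℝ, (∀ m, 0 < p m) → (∑ m, p m = 1) →
      ∑ m, (a m / pstar m + b m * pstar m) ≤ ∑ m, (a m / p m + b m * p m))
    (i j : Fin M) (hab : a j ≤ a i) (hba : b i ≤ b j) :
    pstar j ≤ pstar i :=
  optimal_probability_monotone_general M a b ha pstar hpos hsum hopt i j hab hba
end
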